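/- For all integers ℓ ≥ 1 and n ≥ ℓ + 2, the total number of ℓ-valleys, summed over all flattened Catalan words of length n, equals (1 + (2n − 2ℓ − 5)·3^(n − ℓ − 2))/4. -/
import Mathlib


/-- `w : ℕ → ℕ` encodes a Catalan word of length `n` (0-indexed letters
`w 0, w 1, …, w (n-1)`): the first letter is `0`, each letter is at most the
previous one plus one, and `w` is normalized to vanish at positions `≥ n`. -/
def IsCatalanWord (n : ℕ) (w : ℕ → ℕ) : Prop :=
  w 0 = 0 ∧ (∀ i, i + 1 < n → w (i + 1) ≤ w i + 1) ∧ ∀ i, n ≤ i → w i = 0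

/-- `j` is the starting position of one of the maximal weakly increasing
contiguous subwords (runs of weak ascents) of the length-`n` word `w`. -/
def IsRunStart (n : ℕ) (w : ℕ → ℕ) (j : ℕ) : Prop :=
  j < n ∧ (j = 0 ∨ w j < w (j - 1))

/-- A word is flattened when the leading terms of its maximal weakly increasing
contiguous subwords, read from left to right, form a weakly increasing sequence. -/
def IsFlattened (n : ℕ) (w : ℕ → ℕ) : Prop :=
  ∀ i j, IsRunStart n w i → IsRunStart n w j → i ≤ j → w i ≤ w j

/-- The set of flattened Catalan words of length `n`. -/
def FlatCat (n : ℕ) : Set (ℕ → ℕ) := {w | IsCatalanWord n w ∧ IsFlattened n w}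

/-- Number of maximal strictly increasing contiguous subwords (runs of ascents):
`1 + #{ i : w_i ≥ w_{i+1} }`. -/
noncomputable def runsAsc (n : ℕ) (w : ℕ → ℕ) : ℕ :=
  1 + {i : ℕ | i + 1 < n ∧ w (i + 1) ≤ w i}.ncard

/-- Number of maximal weakly increasing contiguous subwords (runs of weak
ascents): `1 + #{ i : w_i > w_{i+1} }`. -/
noncomputable def wruns (n : ℕ) (w : ℕ → ℕ) : ℕ :=
  1 + {i : ℕ | i + 1 < n ∧ w (i + 1) < w i}.ncard

/-- Number of maximal strictly decreasing contiguous subwords (runs of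
descents): `1 + #{ i : w_i ≤ w_{i+1} }`. -/
noncomputable def runsDesc (n : ℕ) (w : ℕ → ℕ) : ℕ :=
  1 + {i : ℕ | i + 1 < n ∧ w i ≤ w (i + 1)}.ncard

/-- Number of maximal weakly decreasing contiguous subwords (runs of weak
descents): `1 + #{ i : w_i < w_{i+1} }`. -/
noncomputable def wrunsDesc (n : ℕ) (w : ℕ → ℕ) : ℕ :=
  1 + {i : ℕ | i + 1 < n ∧ w i < w (i + 1)}.ncard

/-- An `ℓ`-valley `a b^ℓ (b+1)` (with `a > b`) occurring at position `i` of the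
length-`n` word `w`. -/
def IsLValley (n : ℕ) (w : ℕ → ℕ) (ℓ i : ℕ) : Prop :=
  i + ℓ + 1 < n ∧ w (i + 1) < w i ∧ (∀ t, 1 ≤ t → t ≤ ℓ → w (i + t) = w (i + 1)) ∧
    w (i + ℓ + 1) = w (i + 1) + 1

/-- Number of `ℓ`-valleys of `w`. -/
noncomputable def lValleyCount (n : ℕ) (w : ℕ → ℕ) (ℓ : ℕ) : ℕ :=
  {i : ℕ | IsLValley n w ℓ i}.ncard

/-- Number of valleys of `w` (all `ℓ`-valleys, `ℓ ≥ 1`). -/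
noncomputable def valleyCount (n : ℕ) (w : ℕ → ℕ) : ℕ :=
  {p : ℕ × ℕ | 1 ≤ p.2 ∧ IsLValley n w p.2 p.1}.ncard

/-- A symmetric valley `a (a-1)^ℓ a` (with `ℓ ≥ 1`) occurring at position `i`. -/
def IsSymValley (n : ℕ) (w : ℕ → ℕ) (ℓ i : ℕ) : Prop :=
  i + ℓ + 1 < n ∧ w i = w (i + 1) + 1 ∧ (∀ t, 1 ≤ t → t ≤ ℓ → w (i + t) = w (i + 1)) ∧
    w (i + ℓ + 1) = w i

/-- Number of symmetric valleys of `w` (over all `ℓ ≥ 1`). -/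
noncomputable def symValleyCount (n : ℕ) (w : ℕ → ℕ) : ℕ :=
  {p : ℕ × ℕ | 1 ≤ p.2 ∧ IsSymValley n w p.2 p.1}.ncard

/-- An `ℓ`-peak `a (a+1)^ℓ b` (with `a ≥ b`) occurring at position `i` of the
length-`n` word `w`. -/
def IsLPeak (n : ℕ) (w : ℕ → ℕ) (ℓ i : ℕ) : Prop :=
  i + ℓ + 1 < n ∧ (∀ t, 1 ≤ t → t ≤ ℓ → w (i + t) = w i + 1) ∧ w (i + ℓ + 1) ≤ w i

/-- Number of `ℓ`-peaks of `w`. -/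
noncomputable def lPeakCount (n : ℕ) (w : ℕ → ℕ) (ℓ : ℕ) : ℕ :=
  {i : ℕ | IsLPeak n w ℓ i}.ncard

/-- Number of peaks of `w` (all `ℓ`-peaks, `ℓ ≥ 1`). -/
noncomputable def peakCount (n : ℕ) (w : ℕ → ℕ) : ℕ :=
  {p : ℕ × ℕ | 1 ≤ p.2 ∧ IsLPeak n w p.2 p.1}.ncard

/-- A symmetric peak `a (a+1)^ℓ a` (with `ℓ ≥ 1`) occurring at position `i`. -/
def IsSymPeak (n : ℕ) (w : ℕ → ℕ) (ℓ i : ℕ) : Prop :=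
  i + ℓ + 1 < n ∧ (∀ t, 1 ≤ t → t ≤ ℓ → w (i + t) = w i + 1) ∧ w (i + ℓ + 1) = w i

/-- Number of symmetric peaks of `w` (over all `ℓ ≥ 1`). -/
noncomputable def symPeakCount (n : ℕ) (w : ℕ → ℕ) : ℕ :=
  {p : ℕ × ℕ | 1 ≤ p.2 ∧ IsSymPeak n w p.2 p.1}.ncard

/-! ### Auxiliary development -/

noncomputable section FlatAux
open Finset Function
open scoped Classical

lemma cat_le {n : ℕ} {w : ℕ → ℕ} (hw : IsCatalanWord n w) : ∀ i, w i ≤ i := by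
  intro i
  induction i with
  | zero => exact le_of_eq hw.1
  | succ k ih =>
    by_cases h : k + 1 < n
    · exact le_trans (hw.2.1 k h) (by omega)
    · rw [hw.2.2 _ (by omega)]; omega

lemma flatcat_finite (n : ℕ) : (FlatCat n).Finite := by
  have hsub : FlatCat n ⊆
      (fun f : Fin n → Fin (n + 1) => fun i => if h : i < n then (f ⟨i, h⟩ : ℕ) else 0) ''
        Set.univ := by
    rintro w ⟨hc, -⟩
    refine ⟨fun i => ⟨w i, ?_⟩, Set.mem_univ _, ?_⟩
    · have := cat_le hc i; have := i.2; omega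
    · funext i
      by_cases h : i < n
      · simp [h]
      · simp [h, hc.2.2 i (by omega)]
  exact Set.Finite.subset (Set.toFinite _) hsub

/-- Flattened Catalan words of length `n`, as a `Finset`. -/
def FCF (n : ℕ) : Finset (ℕ → ℕ) := (flatcat_finite n).toFinset

lemma mem_FCF {n : ℕ} {w : ℕ → ℕ} : w ∈ FCF n ↔ w ∈ FlatCat n := Set.Finite.mem_toFinset _

lemma isRunStart_update {m k j v : ℕ} {w : ℕ → ℕ} (hjk : j < k) :
    IsRunStart m (Function.update w k v) j ↔ IsRunStart m w j := by
  unfold IsRunStart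
  rw [Function.update_of_ne (by omega), Function.update_of_ne (by omega)]

lemma isRunStart_len {m m' j : ℕ} {w : ℕ → ℕ} (h : j < m) (h' : j < m') :
    IsRunStart m w j ↔ IsRunStart m' w j := by
  unfold IsRunStart; tauto

lemma isRunStart_zero {n : ℕ} (w : ℕ → ℕ) (hn : 0 < n) : IsRunStart n w 0 :=
  ⟨hn, Or.inl rfl⟩

/-- run-start values are bounded by any later letter (within the word). -/
lemma runstart_le {n : ℕ} {w : ℕ → ℕ} (hw : w ∈ FlatCat n) :
    ∀ i, i < n → ∀ j, IsRunStart n w j → j ≤ i → w j ≤ w i := by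
  intro i
  induction i with
  | zero => intro _ j _ hj; interval_cases j; exact le_rfl
  | succ k ih =>
    intro hk j hjr hj
    by_cases hrs : IsRunStart n w (k + 1)
    · exact hw.2 j (k + 1) hjr hrs hj
    · rcases Nat.lt_or_ge j (k + 1) with h | h
      · refine le_trans (ih (by omega) j hjr (by omega)) ?_
        have : ¬ (k + 1 = 0 ∨ w (k + 1) < w k) := fun hc => hrs ⟨hk, by simpa using hc⟩
        simp only [Nat.succ_ne_zero, false_or, not_lt] at this
        simpa using this
      · exact absurd (by rwa [(by omega : j = k + 1)] at hjr) hrs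

/-- The set of run starts. -/
def RS (n : ℕ) (w : ℕ → ℕ) : Finset ℕ := (Finset.range n).filter (fun j => IsRunStart n w j)

lemma mem_RS {n j : ℕ} {w : ℕ → ℕ} : j ∈ RS n w ↔ IsRunStart n w j := by
  unfold RS
  simp only [Finset.mem_filter, Finset.mem_range]
  exact ⟨fun h => h.2, fun h => ⟨h.1, h⟩⟩

/-- The "bottom": maximal run-start value. -/
def bot (n : ℕ) (w : ℕ → ℕ) : ℕ := (RS n w).sup w

lemma le_bot {n j : ℕ} {w : ℕ → ℕ} (h : IsRunStart n w j) : w j ≤ bot n w :=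
  Finset.le_sup (mem_RS.2 h)

lemma bot_le_last {n : ℕ} {w : ℕ → ℕ} (hw : w ∈ FlatCat (n + 1)) : bot (n + 1) w ≤ w n :=
  Finset.sup_le fun j hj =>
    runstart_le hw n (by omega) j (mem_RS.1 hj) (by have := (mem_RS.1 hj).1; omega)

lemma update_eq_self {n : ℕ} {w : ℕ → ℕ} (hw : w ∈ FlatCat n) :
    Function.update w n 0 = w := by
  funext i
  rcases eq_or_ne i n with rfl | h
  · rw [Function.update_self, hw.1.2.2 i le_rfl]
  · rw [Function.update_of_ne h]

/-- Truncating the last letter of a flattened Catalan word. -/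
lemma trunc_mem {n : ℕ} {w : ℕ → ℕ} (hw : w ∈ FlatCat (n + 2)) :
    Function.update w (n + 1) 0 ∈ FlatCat (n + 1) := by
  obtain ⟨⟨h0, hstep, hvan⟩, hflat⟩ := hw
  refine ⟨⟨?_, ?_, ?_⟩, ?_⟩
  · rw [Function.update_of_ne (by omega)]; exact h0
  · intro i hi
    rw [Function.update_of_ne (by omega), Function.update_of_ne (by omega)]
    exact hstep i (by omega)
  · intro i hi
    rcases eq_or_ne i (n + 1) with rfl | h
    · exact Function.update_self _ _ _
    · rw [Function.update_of_ne h]; exact hvan i (by omega)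
  · intro i j hi hj hij
    have hi' : i ≤ n := by have := hi.1; omega
    have hj' : j ≤ n := by have := hj.1; omega
    rw [Function.update_of_ne (by omega), Function.update_of_ne (by omega)]
    have hi2 : IsRunStart (n + 2) w i := by
      rw [← isRunStart_update (w := w) (v := (0:ℕ)) (by omega : i < n + 1)]
      exact (isRunStart_len (by omega) (by omega)).1 hi
    have hj2 : IsRunStart (n + 2) w j := by
      rw [← isRunStart_update (w := w) (v := (0:ℕ)) (by omega : j < n + 1)]
      exact (isRunStart_len (by omega) (by omega)).1 hj
    exact hflat i j hi2 hj2 hij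

/-- The last letter lies in the valid interval of the truncation. -/
lemma last_mem_Icc {n : ℕ} {w : ℕ → ℕ} (hw : w ∈ FlatCat (n + 2)) :
    w (n + 1) ∈ Finset.Icc (bot (n + 1) (Function.update w (n + 1) 0))
      (Function.update w (n + 1) 0 n + 1) := by
  set u := Function.update w (n + 1) 0 with hu
  have hun : ∀ i, i ≤ n → u i = w i := fun i hi => Function.update_of_ne (by omega) _ _
  have hmem : u ∈ FlatCat (n + 1) := trunc_mem hw
  rw [Finset.mem_Icc]
  constructor
  · -- bot ≤ w (n+1)
    rcases Nat.lt_or_ge (w (n + 1)) (w n) with hlt | hge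
    · -- descent: n+1 is a run start of w; flatness bounds all run-start values
      have hrs : IsRunStart (n + 2) w (n + 1) := ⟨by omega, Or.inr (by simpa using hlt)⟩
      refine Finset.sup_le fun j hj => ?_
      have hj1 := mem_RS.1 hj
      have hj' : j ≤ n := by have := hj1.1; omega
      have hj2 : IsRunStart (n + 2) w j := by
        rw [hu] at hj1
        exact (isRunStart_len (by omega) (by omega)).1
          ((isRunStart_update (by omega : j < n + 1)).1 hj1)
      calc u j = w j := hun j hj'
        _ ≤ w (n + 1) := hw.2 j (n + 1) hj2 hrs (by omega)
    · calc bot (n + 1) u ≤ u n := bot_le_last hmem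
        _ = w n := hun n le_rfl
        _ ≤ w (n + 1) := hge
  · rw [hun n le_rfl]
    exact hw.1.2.1 n (by omega)

/-- Extending a flattened Catalan word by a letter in the valid interval. -/
lemma extend_mem {n v : ℕ} {u : ℕ → ℕ} (hu : u ∈ FlatCat (n + 1))
    (hv : v ∈ Finset.Icc (bot (n + 1) u) (u n + 1)) :
    Function.update u (n + 1) v ∈ FlatCat (n + 2) := by
  rw [Finset.mem_Icc] at hv
  obtain ⟨⟨h0, hstep, hvan⟩, hflat⟩ := hu
  set w := Function.update u (n + 1) v with hwdef
  have hwn : ∀ i, i ≤ n → w i = u i := fun i hi => Function.update_of_ne (by omega) _ _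
  refine ⟨⟨?_, ?_, ?_⟩, ?_⟩
  · rw [hwn 0 (by omega)]; exact h0
  · intro i hi
    rcases Nat.lt_or_ge (i + 1) (n + 1) with h | h
    · rw [hwn (i + 1) (by omega), hwn i (by omega)]; exact hstep i h
    · have h1 : w (n + 1) = v := by rw [hwdef]; exact Function.update_self _ _ _
      have hieq : i = n := by omega
      rw [hieq, h1, hwn n le_rfl]
      exact hv.2
  · intro i hi
    rw [hwdef, Function.update_of_ne (by omega)]
    exact hvan i (by omega)
  · intro i j hi hj hij
    rcases Nat.lt_or_ge j (n + 1) with hjn | hjn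
    · have hin : i < n + 1 := by omega
      rw [hwn i (by omega), hwn j (by omega)]
      refine hflat i j ?_ ?_ hij
      · rw [hwdef, isRunStart_update (by omega)] at hi
        exact (isRunStart_len (by omega) (by omega)).1 hi
      · rw [hwdef, isRunStart_update (by omega)] at hj
        exact (isRunStart_len (by omega) (by omega)).1 hj
    · have hj' : j = n + 1 := by have := hj.1; omega
      subst hj'
      rcases Nat.lt_or_ge i (n + 1) with hin | hin
      · have hi1 : IsRunStart (n + 1) u i := by
          rw [hwdef, isRunStart_update (by omega)] at hi
          exact (isRunStart_len (by omega) (by omega)).1 hi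
        calc w i = u i := hwn i (by omega)
          _ ≤ bot (n + 1) u := le_bot hi1
          _ ≤ v := hv.1
          _ = w (n + 1) := by rw [hwdef, Function.update_self]
      · have : i = n + 1 := by have := hi.1; omega
        rw [this]

/-- Master decomposition: a sum over flattened Catalan words of length `n+2`
splits as a sum over words of length `n+1` and valid last letters. -/
lemma sum_ext {M : Type*} [AddCommMonoid M] (n : ℕ) (g : (ℕ → ℕ) → M) :
    ∑ w ∈ FCF (n + 2), g w =
      ∑ u ∈ FCF (n + 1), ∑ v ∈ Finset.Icc (bot (n + 1) u) (u n + 1),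
        g (Function.update u (n + 1) v) := by
  rw [Finset.sum_sigma']
  refine Finset.sum_nbij' (fun w => ⟨Function.update w (n + 1) 0, w (n + 1)⟩)
    (fun p => Function.update p.1 (n + 1) p.2) ?_ ?_ ?_ ?_ ?_
  · intro w hw
    rw [mem_FCF] at hw
    exact Finset.mem_sigma.2 ⟨mem_FCF.2 (trunc_mem hw), last_mem_Icc hw⟩
  · rintro ⟨u, v⟩ hp
    rw [Finset.mem_sigma] at hp
    exact mem_FCF.2 (extend_mem (mem_FCF.1 hp.1) hp.2)
  · intro w hw
    funext i
    rcases eq_or_ne i (n + 1) with rfl | h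
    · simp
    · simp [Function.update_of_ne h]
  · rintro ⟨u, v⟩ hp
    rw [Finset.mem_sigma] at hp
    have hu := mem_FCF.1 hp.1
    have h1 : Function.update (Function.update u (n + 1) v) (n + 1) 0 = u := by
      rw [Function.update_idem]; exact update_eq_self hu
    have h2 : Function.update u (n + 1) v (n + 1) = v := Function.update_self _ _ _
    simp only [h1, h2]
  · intro w hw
    simp only
    congr 1
    funext i
    rcases eq_or_ne i (n + 1) with rfl | h
    · simp
    · simp [Function.update_of_ne h]

lemma RS_ext {n v : ℕ} (u : ℕ → ℕ) :
    RS (n + 2) (Function.update u (n + 1) v) =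
      if v < u n then insert (n + 1) (RS (n + 1) u) else RS (n + 1) u := by
  have hbd : ∀ j, j ≤ n →
      (IsRunStart (n + 2) (Function.update u (n + 1) v) j ↔ IsRunStart (n + 1) u j) := by
    intro j hj
    rw [isRunStart_update (by omega)]
    exact isRunStart_len (by omega) (by omega)
  have htop : IsRunStart (n + 2) (Function.update u (n + 1) v) (n + 1) ↔ v < u n := by
    unfold IsRunStart
    have e1 : Function.update u (n + 1) v (n + 1) = v := Function.update_self _ _ _
    have e2 : Function.update u (n + 1) v (n + 1 - 1) = u n := by
      rw [show n + 1 - 1 = n by omega]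
      exact Function.update_of_ne (by omega) _ _
    rw [e1, e2]
    constructor
    · rintro ⟨-, h | h⟩
      · omega
      · exact h
    · intro h; exact ⟨by omega, Or.inr h⟩
  by_cases hlt : v < u n
  · rw [if_pos hlt]
    ext j
    rw [mem_RS, Finset.mem_insert, mem_RS]
    rcases Nat.lt_or_ge j (n + 1) with h | h
    · rw [hbd j (by omega)]
      constructor
      · exact fun hh => Or.inr hh
      · rintro (rfl | hh)
        · omega
        · exact hh
    · constructor
      · intro hh; left; have := hh.1; omega
      · rintro (rfl | hh)
        · exact htop.2 hlt
        · have := hh.1; omega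
  · rw [if_neg hlt]
    ext j
    rw [mem_RS, mem_RS]
    rcases Nat.lt_or_ge j (n + 1) with h | h
    · exact hbd j (by omega)
    · constructor
      · intro hh
        have hj : j = n + 1 := by have := hh.1; omega
        exact absurd (htop.1 (hj ▸ hh)) hlt
      · intro hh; have := hh.1; omega

lemma bot_ext {n v : ℕ} {u : ℕ → ℕ} (hv : bot (n + 1) u ≤ v) :
    bot (n + 2) (Function.update u (n + 1) v) =
      if v < u n then v else bot (n + 1) u := by
  have hsup : (RS (n + 1) u).sup (Function.update u (n + 1) v) = bot (n + 1) u := by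
    refine Finset.sup_congr rfl fun j hj => ?_
    exact Function.update_of_ne (by have := (mem_RS.1 hj).1; omega) _ _
  by_cases hlt : v < u n
  · rw [if_pos hlt]
    unfold bot
    rw [RS_ext, if_pos hlt, Finset.sup_insert, Function.update_self]
    unfold bot at hv
    rw [hsup]
    exact sup_eq_left.2 hv
  · rw [if_neg hlt]
    unfold bot
    rw [RS_ext, if_neg hlt, hsup]
    rfl

/-- Ending pattern: the word ends with `a b^k`, `a > b`. -/
def EndPat (n k : ℕ) (w : ℕ → ℕ) : Prop :=
  ∃ i, i + k + 1 = n ∧ w (i + 1) < w i ∧ ∀ t, 1 ≤ t → t ≤ k → w (i + t) = w (i + 1)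

lemma endpat_last {n ℓ : ℕ} {u : ℕ → ℕ} (hl : 1 ≤ ℓ) (h : EndPat (n + 1) ℓ u) :
    ∃ i, i + ℓ = n ∧ u n = u (i + 1) ∧ u (i + 1) < u i ∧
      ∀ t, 1 ≤ t → t ≤ ℓ → u (i + t) = u (i + 1) := by
  obtain ⟨i, hi, hd, heq⟩ := h
  refine ⟨i, by omega, ?_, hd, heq⟩
  have := heq ℓ hl le_rfl
  rw [show i + ℓ = n by omega] at this
  exact this

lemma endpat_bot {n ℓ : ℕ} {u : ℕ → ℕ} (hu : u ∈ FlatCat (n + 1)) (hl : 1 ≤ ℓ)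
    (h : EndPat (n + 1) ℓ u) : bot (n + 1) u = u n := by
  obtain ⟨i, hi, hlast, hd, -⟩ := endpat_last hl h
  refine le_antisymm (bot_le_last hu) ?_
  have hrs : IsRunStart (n + 1) u (i + 1) := by
    refine ⟨by omega, Or.inr ?_⟩
    simpa using hd
  rw [hlast]
  exact le_bot hrs

lemma lValleyCount_eq (n ℓ : ℕ) (w : ℕ → ℕ) :
    lValleyCount n w ℓ = ((Finset.range n).filter (IsLValley n w ℓ)).card := by
  unfold lValleyCount
  rw [show {i : ℕ | IsLValley n w ℓ i} =
      ↑((Finset.range n).filter (IsLValley n w ℓ)) from ?_, Set.ncard_coe_finset]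
  ext i
  simp only [Set.mem_setOf_eq, Finset.coe_filter, Finset.mem_range]
  exact ⟨fun h => ⟨by have := h.1; omega, h⟩, fun h => h.2⟩

lemma valley_ext_pointwise {n ℓ v i : ℕ} {u : ℕ → ℕ} (hl : 1 ≤ ℓ) :
    IsLValley (n + 2) (Function.update u (n + 1) v) ℓ i ↔
      (IsLValley (n + 1) u ℓ i ∨
        ((EndPat (n + 1) ℓ u ∧ v = u n + 1) ∧ i + ℓ + 1 = n + 1)) := by
  have hup : ∀ x, x ≤ n → Function.update u (n + 1) v x = u x :=
    fun x hx => Function.update_of_ne (by omega) _ _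
  constructor
  · rintro ⟨hb, hd, heq, hfin⟩
    rcases Nat.lt_or_ge (i + ℓ + 1) (n + 1) with h | h
    · left
      refine ⟨h, ?_, ?_, ?_⟩
      · rw [hup (i + 1) (by omega), hup i (by omega)] at hd; exact hd
      · intro t ht1 ht2
        have := heq t ht1 ht2
        rw [hup (i + t) (by omega), hup (i + 1) (by omega)] at this
        exact this
      · have := hfin
        rw [hup (i + ℓ + 1) (by omega), hup (i + 1) (by omega)] at this
        exact this
    · have hIeq : i + ℓ + 1 = n + 1 := by omega
      right
      have hd' : u (i + 1) < u i := by
        rw [hup (i + 1) (by omega), hup i (by omega)] at hd; exact hd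
      have heq' : ∀ t, 1 ≤ t → t ≤ ℓ → u (i + t) = u (i + 1) := by
        intro t ht1 ht2
        have := heq t ht1 ht2
        rw [hup (i + t) (by omega), hup (i + 1) (by omega)] at this
        exact this
      have hun : u n = u (i + 1) := by
        have := heq' ℓ hl le_rfl
        rw [show i + ℓ = n by omega] at this
        exact this
      have hv : v = u n + 1 := by
        have := hfin
        rw [hIeq, Function.update_self, hup (i + 1) (by omega)] at this
        rw [this, hun]
      exact ⟨⟨⟨i, hIeq, hd', heq'⟩, hv⟩, hIeq⟩
  · rintro (⟨hb, hd, heq, hfin⟩ | ⟨⟨hep, hv⟩, hIeq⟩)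
    · refine ⟨by omega, ?_, ?_, ?_⟩
      · rw [hup (i + 1) (by omega), hup i (by omega)]; exact hd
      · intro t ht1 ht2
        rw [hup (i + t) (by omega), hup (i + 1) (by omega)]
        exact heq t ht1 ht2
      · rw [hup (i + ℓ + 1) (by omega), hup (i + 1) (by omega)]; exact hfin
    · obtain ⟨i', hi', hun, hd', heq'⟩ := endpat_last hl hep
      rw [show i' = i by omega] at hun hd' heq'
      refine ⟨by omega, ?_, ?_, ?_⟩
      · rw [hup (i + 1) (by omega), hup i (by omega)]; exact hd'
      · intro t ht1 ht2
        rw [hup (i + t) (by omega), hup (i + 1) (by omega)]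
        exact heq' t ht1 ht2
      · rw [hIeq, Function.update_self, hup (i + 1) (by omega), hv, hun]

lemma valley_ext_count {n ℓ v : ℕ} {u : ℕ → ℕ} (hl : 1 ≤ ℓ) :
    lValleyCount (n + 2) (Function.update u (n + 1) v) ℓ =
      lValleyCount (n + 1) u ℓ +
        (if EndPat (n + 1) ℓ u ∧ v = u n + 1 then 1 else 0) := by
  rw [lValleyCount_eq, lValleyCount_eq]
  by_cases hc : EndPat (n + 1) ℓ u ∧ v = u n + 1
  · rw [if_pos hc]
    have hln : ℓ ≤ n := by obtain ⟨i, hi, -, -⟩ := hc.1; omega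
    have hset : (Finset.range (n + 2)).filter (IsLValley (n + 2) (Function.update u (n + 1) v) ℓ)
        = insert (n - ℓ) ((Finset.range (n + 1)).filter (IsLValley (n + 1) u ℓ)) := by
      ext i
      simp only [Finset.mem_filter, Finset.mem_range, Finset.mem_insert]
      rw [valley_ext_pointwise hl]
      constructor
      · rintro ⟨hi, hV | ⟨-, hIeq⟩⟩
        · exact Or.inr ⟨by have := hV.1; omega, hV⟩
        · exact Or.inl (by omega)
      · rintro (rfl | ⟨hi, hV⟩)
        · exact ⟨by omega, Or.inr ⟨hc, by omega⟩⟩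
        · exact ⟨by omega, Or.inl hV⟩
    rw [hset, Finset.card_insert_of_notMem, Nat.add_comm]
    simp only [Finset.mem_filter, Finset.mem_range, not_and]
    intro hmem hV
    have := hV.1
    omega
  · rw [if_neg hc]
    have hset : (Finset.range (n + 2)).filter (IsLValley (n + 2) (Function.update u (n + 1) v) ℓ)
        = (Finset.range (n + 1)).filter (IsLValley (n + 1) u ℓ) := by
      ext i
      simp only [Finset.mem_filter, Finset.mem_range]
      rw [valley_ext_pointwise hl]
      constructor
      · rintro ⟨hi, hV | ⟨hcc, -⟩⟩
        · exact ⟨by have := hV.1; omega, hV⟩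
        · exact absurd hcc hc
      · rintro ⟨hi, hV⟩
        exact ⟨by omega, Or.inl hV⟩
    rw [hset]
    omega

lemma inner_card (b c : ℕ) (_h : b ≤ c) :
    ∑ _v ∈ Finset.Icc b (c + 1), (1 : ℕ) = (c - b) + 2 := by
  rw [Finset.sum_const, Nat.card_Icc, smul_eq_mul, mul_one]
  omega

lemma inner_height (b c : ℕ) (h : b ≤ c) :
    ∑ v ∈ Finset.Icc b (c + 1), (v - if v < c then v else b) = 2 * (c - b) + 1 := by
  rw [← Finset.sum_subset (s₁ := {c, c + 1}) ?_ ?_]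
  · rw [Finset.sum_insert (by simp), Finset.sum_singleton]
    rw [if_neg (by omega), if_neg (by omega)]
    omega
  · intro x hx
    simp only [Finset.mem_insert, Finset.mem_singleton] at hx
    rcases hx with rfl | rfl <;> simp [Finset.mem_Icc] <;> omega
  · intro x hx hnx
    simp only [Finset.mem_insert, Finset.mem_singleton] at hnx
    rw [Finset.mem_Icc] at hx
    rw [if_pos (by omega)]
    omega

lemma inner_lt (b c : ℕ) (h : b ≤ c) :
    ∑ v ∈ Finset.Icc b (c + 1), (if v < c then 1 else 0) = c - b := by
  rw [← Finset.card_filter]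
  rw [show (Finset.Icc b (c + 1)).filter (fun v => v < c) = Finset.Ico b c from ?_]
  · rw [Nat.card_Ico]
  · ext x
    simp only [Finset.mem_filter, Finset.mem_Icc, Finset.mem_Ico]
    omega

lemma inner_eqc (b c A : ℕ) (h : b ≤ c) :
    ∑ v ∈ Finset.Icc b (c + 1), (if v = c then A else 0) = A := by
  rw [Finset.sum_ite_eq' (Finset.Icc b (c + 1)) c (fun _ => A),
    if_pos (by rw [Finset.mem_Icc]; omega)]

lemma inner_eqc1 (b c A : ℕ) (h : b ≤ c) :
    ∑ v ∈ Finset.Icc b (c + 1), (if v = c + 1 then A else 0) = A := by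
  rw [Finset.sum_ite_eq' (Finset.Icc b (c + 1)) (c + 1) (fun _ => A),
    if_pos (by rw [Finset.mem_Icc]; omega)]

lemma inner_valley (b c A : ℕ) (P : Prop) (h : b ≤ c) :
    ∑ v ∈ Finset.Icc b (c + 1), (A + if P ∧ v = c + 1 then 1 else 0) =
      ((c - b) + 2) * A + (if P then 1 else 0) := by
  rw [Finset.sum_add_distrib]
  by_cases hP : P
  · simp only [hP, true_and, if_true]
    rw [inner_eqc1 b c 1 h, Finset.sum_const, Nat.card_Icc, smul_eq_mul]
    have : c + 1 + 1 - b = c - b + 2 := by omega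
    rw [this]
  · simp only [hP, false_and, if_false, Finset.sum_const_zero]
    rw [Finset.sum_const, Nat.card_Icc, smul_eq_mul]
    have : c + 1 + 1 - b = c - b + 2 := by omega
    rw [this]

lemma inner_hv (b c A : ℕ) (P : Prop) (h : b ≤ c) :
    ∑ v ∈ Finset.Icc b (c + 1),
        (v - if v < c then v else b) * (A + if P ∧ v = c + 1 then 1 else 0) =
      (2 * (c - b) + 1) * A + (if P then c + 1 - b else 0) := by
  have expand : ∀ v ∈ Finset.Icc b (c + 1),
      (v - if v < c then v else b) * (A + if P ∧ v = c + 1 then 1 else 0) =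
        (v - if v < c then v else b) * A +
          (if v = c + 1 then (if P then c + 1 - b else 0) else 0) := by
    intro v hv
    rw [Finset.mem_Icc] at hv
    by_cases hveq : v = c + 1
    · subst hveq
      by_cases hP : P
      · simp only [hP, true_and, if_true]
        rw [if_neg (show ¬ c + 1 < c by omega), mul_add, mul_one]
      · simp [hP]
    · have hD : ¬ (P ∧ v = c + 1) := fun hc => hveq hc.2
      simp [hD, hveq]
  rw [Finset.sum_congr rfl expand, Finset.sum_add_distrib, ← Finset.sum_mul,
    inner_height b c h, inner_eqc1 b c _ h]

lemma endpat_one_ext {n v : ℕ} (u : ℕ → ℕ) :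
    EndPat (n + 2) 1 (Function.update u (n + 1) v) ↔ v < u n := by
  constructor
  · rintro ⟨i, hi, hd, -⟩
    have : i = n := by omega
    subst this
    rwa [Function.update_self, Function.update_of_ne (by omega)] at hd
  · intro hlt
    refine ⟨n, by omega, ?_, ?_⟩
    · rwa [Function.update_self, Function.update_of_ne (by omega)]
    · intro t ht1 ht2
      have : t = 1 := by omega
      subst this
      rfl

lemma endpat_succ_ext {n k v : ℕ} (hk : 1 ≤ k) (u : ℕ → ℕ) :
    EndPat (n + 2) (k + 1) (Function.update u (n + 1) v) ↔
      (EndPat (n + 1) k u ∧ v = u n) := by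
  have hup : ∀ x, x ≤ n → Function.update u (n + 1) v x = u x :=
    fun x hx => Function.update_of_ne (by omega) _ _
  constructor
  · rintro ⟨i, hi, hd, heq⟩
    have hin : i + k = n := by omega
    have hd' : u (i + 1) < u i := by
      rwa [hup (i + 1) (by omega), hup i (by omega)] at hd
    have heq' : ∀ t, 1 ≤ t → t ≤ k → u (i + t) = u (i + 1) := by
      intro t ht1 ht2
      have := heq t ht1 (by omega)
      rwa [hup (i + t) (by omega), hup (i + 1) (by omega)] at this
    refine ⟨⟨i, by omega, hd', heq'⟩, ?_⟩
    have h1 := heq (k + 1) (by omega) le_rfl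
    rw [show i + (k + 1) = n + 1 by omega, Function.update_self,
      hup (i + 1) (by omega)] at h1
    have h2 := heq' k hk le_rfl
    rw [hin] at h2
    rw [h1, ← h2]
  · rintro ⟨⟨i, hi, hd, heq⟩, hv⟩
    have hin : i + k = n := by omega
    refine ⟨i, by omega, ?_, ?_⟩
    · rwa [hup (i + 1) (by omega), hup i (by omega)]
    · intro t ht1 ht2
      rcases Nat.lt_or_ge t (k + 1) with h | h
      · rw [hup (i + t) (by omega), hup (i + 1) (by omega)]
        exact heq t ht1 (by omega)
      · have : t = k + 1 := by omega
        subst this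
        rw [show i + (k + 1) = n + 1 by omega, Function.update_self,
          hup (i + 1) (by omega), hv]
        have h2 := heq k hk le_rfl
        rw [hin] at h2
        rw [h2]

/-! ### Statistics -/

def Tst (n : ℕ) : ℕ := (FCF (n + 1)).card
def Hst (n : ℕ) : ℕ := ∑ w ∈ FCF (n + 1), (w n - bot (n + 1) w)
def Vst (ℓ n : ℕ) : ℕ := ∑ w ∈ FCF (n + 1), lValleyCount (n + 1) w ℓ
def HVst (ℓ n : ℕ) : ℕ :=
  ∑ w ∈ FCF (n + 1), (w n - bot (n + 1) w) * lValleyCount (n + 1) w ℓ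
def Est (k n : ℕ) : ℕ := ∑ w ∈ FCF (n + 1), (if EndPat (n + 1) k w then 1 else 0)

lemma Tst_succ (n : ℕ) : Tst (n + 1) = 2 * Tst n + Hst n := by
  unfold Tst Hst
  rw [Finset.card_eq_sum_ones, sum_ext]
  have key : ∀ u ∈ FCF (n + 1),
      (∑ _v ∈ Finset.Icc (bot (n + 1) u) (u n + 1), (1 : ℕ)) =
        (u n - bot (n + 1) u) + 2 := fun u hu =>
    inner_card _ _ (bot_le_last (mem_FCF.1 hu))
  rw [Finset.sum_congr rfl key, Finset.sum_add_distrib, Finset.sum_const, smul_eq_mul,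
    Finset.card_eq_sum_ones (FCF (n + 1))]
  ring_nf

lemma Hst_succ (n : ℕ) : Hst (n + 1) = 2 * Hst n + Tst n := by
  unfold Hst Tst
  rw [sum_ext]
  have key : ∀ u ∈ FCF (n + 1),
      (∑ v ∈ Finset.Icc (bot (n + 1) u) (u n + 1),
        (Function.update u (n + 1) v (n + 1) - bot (n + 2) (Function.update u (n + 1) v))) =
        2 * (u n - bot (n + 1) u) + 1 := by
    intro u hu
    have hbc := bot_le_last (mem_FCF.1 hu)
    have hpt : ∀ v ∈ Finset.Icc (bot (n + 1) u) (u n + 1),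
        Function.update u (n + 1) v (n + 1) - bot (n + 2) (Function.update u (n + 1) v) =
          v - (if v < u n then v else bot (n + 1) u) := by
      intro v hv
      rw [Function.update_self, bot_ext (Finset.mem_Icc.1 hv).1]
    rw [Finset.sum_congr rfl hpt, inner_height _ _ hbc]
  rw [Finset.sum_congr rfl key, Finset.mul_sum, Finset.card_eq_sum_ones,
    ← Finset.sum_add_distrib]

lemma Est_one_succ (n : ℕ) : Est 1 (n + 1) = Hst n := by
  unfold Est Hst
  rw [sum_ext]
  refine Finset.sum_congr rfl fun u hu => ?_
  have hbc := bot_le_last (mem_FCF.1 hu)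
  have hpt : ∀ v ∈ Finset.Icc (bot (n + 1) u) (u n + 1),
      (if EndPat (n + 2) 1 (Function.update u (n + 1) v) then 1 else 0) =
        (if v < u n then 1 else 0) := by
    intro v hv
    by_cases h : v < u n
    · rw [if_pos ((endpat_one_ext u).2 h), if_pos h]
    · rw [if_neg (fun hc => h ((endpat_one_ext u).1 hc)), if_neg h]
  rw [Finset.sum_congr rfl hpt, inner_lt _ _ hbc]

lemma Est_succ_succ (n k : ℕ) (hk : 1 ≤ k) : Est (k + 1) (n + 1) = Est k n := by
  unfold Est
  rw [sum_ext]
  refine Finset.sum_congr rfl fun u hu => ?_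
  have hbc := bot_le_last (mem_FCF.1 hu)
  have hpt : ∀ v ∈ Finset.Icc (bot (n + 1) u) (u n + 1),
      (if EndPat (n + 2) (k + 1) (Function.update u (n + 1) v) then 1 else 0) =
        (if v = u n then (if EndPat (n + 1) k u then 1 else 0) else 0) := by
    intro v hv
    by_cases hveq : v = u n
    · by_cases hP : EndPat (n + 1) k u
      · rw [if_pos ((endpat_succ_ext hk u).2 ⟨hP, hveq⟩), if_pos hveq, if_pos hP]
      · rw [if_neg (fun hc => hP ((endpat_succ_ext hk u).1 hc).1), if_pos hveq, if_neg hP]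
    · rw [if_neg (fun hc => hveq ((endpat_succ_ext hk u).1 hc).2), if_neg hveq]
  rw [Finset.sum_congr rfl hpt, inner_eqc _ _ _ hbc]

lemma Vst_succ (ℓ n : ℕ) (hl : 1 ≤ ℓ) :
    Vst ℓ (n + 1) = 2 * Vst ℓ n + HVst ℓ n + Est ℓ n := by
  unfold Vst HVst Est
  rw [sum_ext, Finset.mul_sum, ← Finset.sum_add_distrib, ← Finset.sum_add_distrib]
  refine Finset.sum_congr rfl fun u hu => ?_
  have hbc := bot_le_last (mem_FCF.1 hu)
  have hpt : ∀ v ∈ Finset.Icc (bot (n + 1) u) (u n + 1),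
      lValleyCount (n + 2) (Function.update u (n + 1) v) ℓ =
        lValleyCount (n + 1) u ℓ +
          (if EndPat (n + 1) ℓ u ∧ v = u n + 1 then 1 else 0) :=
    fun v _ => valley_ext_count hl
  rw [Finset.sum_congr rfl hpt, inner_valley _ _ _ _ hbc]
  ring

lemma HVst_succ (ℓ n : ℕ) (hl : 1 ≤ ℓ) :
    HVst ℓ (n + 1) = Vst ℓ n + 2 * HVst ℓ n + Est ℓ n := by
  unfold Vst HVst Est
  rw [sum_ext, Finset.mul_sum, ← Finset.sum_add_distrib, ← Finset.sum_add_distrib]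
  refine Finset.sum_congr rfl fun u hu => ?_
  have hu' := mem_FCF.1 hu
  have hbc := bot_le_last hu'
  have hpt : ∀ v ∈ Finset.Icc (bot (n + 1) u) (u n + 1),
      (Function.update u (n + 1) v (n + 1) - bot (n + 2) (Function.update u (n + 1) v)) *
          lValleyCount (n + 2) (Function.update u (n + 1) v) ℓ =
        (v - if v < u n then v else bot (n + 1) u) *
          (lValleyCount (n + 1) u ℓ +
            (if EndPat (n + 1) ℓ u ∧ v = u n + 1 then 1 else 0)) := by
    intro v hv
    rw [Function.update_self, bot_ext (Finset.mem_Icc.1 hv).1, valley_ext_count hl]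
  rw [Finset.sum_congr rfl hpt, inner_hv _ _ _ _ hbc]
  have hone : (if EndPat (n + 1) ℓ u then u n + 1 - bot (n + 1) u else 0) =
      (if EndPat (n + 1) ℓ u then 1 else 0) := by
    by_cases hP : EndPat (n + 1) ℓ u
    · rw [if_pos hP, if_pos hP, endpat_bot hu' hl hP]
      omega
    · rw [if_neg hP, if_neg hP]
  rw [hone]
  ring

/-! ### Base cases -/

lemma FCF_one : FCF 1 = {fun _ => (0 : ℕ)} := by
  ext w
  rw [mem_FCF, Finset.mem_singleton]
  constructor
  · intro hw
    funext i
    rcases Nat.eq_zero_or_pos i with rfl | h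
    · exact hw.1.1
    · exact hw.1.2.2 i (by omega)
  · rintro rfl
    exact ⟨⟨rfl, fun i hi => by omega, fun i _ => rfl⟩, fun i j _ _ _ => le_rfl⟩

lemma lValleyCount_one (ℓ : ℕ) (w : ℕ → ℕ) : lValleyCount 1 w ℓ = 0 := by
  unfold lValleyCount
  rw [show {i : ℕ | IsLValley 1 w ℓ i} = (∅ : Set ℕ) from
    Set.eq_empty_iff_forall_notMem.2 fun i hi => by have := hi.1; omega, Set.ncard_empty]

lemma Tst_zero : Tst 0 = 1 := by rw [Tst, FCF_one, Finset.card_singleton]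

lemma Hst_zero : Hst 0 = 0 := by
  rw [Hst, FCF_one, Finset.sum_singleton]
  simp

lemma Vst_zero (ℓ : ℕ) : Vst ℓ 0 = 0 := by
  rw [Vst, FCF_one, Finset.sum_singleton, lValleyCount_one]

lemma HVst_zero (ℓ : ℕ) : HVst ℓ 0 = 0 := by
  rw [HVst, FCF_one, Finset.sum_singleton, lValleyCount_one, Nat.mul_zero]

lemma Est_small (k n : ℕ) (h : n < k) : Est k n = 0 := by
  rw [Est]
  refine Finset.sum_eq_zero fun w hw => ?_
  rw [if_neg]
  rintro ⟨i, hi, -, -⟩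
  omega

/-! ### Closed forms -/

lemma TH_closed : ∀ n, Tst n = Hst n + 1 ∧ Tst n + Hst n = 3 ^ n := by
  intro n
  induction n with
  | zero => rw [Tst_zero, Hst_zero]; omega
  | succ k ih =>
    rw [Tst_succ, Hst_succ, pow_succ]
    omega

lemma Hst_closed (n : ℕ) : 2 * Hst n + 1 = 3 ^ n := by
  have h := TH_closed n
  omega

lemma Est_closed : ∀ k, 1 ≤ k → ∀ n, Est k (n + k) = Hst n := by
  intro k
  induction k with
  | zero => omega
  | succ k ih =>
    intro _ n
    rcases Nat.eq_zero_or_pos k with rfl | hk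
    · exact Est_one_succ n
    · rw [show n + (k + 1) = (n + k) + 1 by omega, Est_succ_succ _ _ hk, ih hk n]

lemma VHV_eq (ℓ : ℕ) (hl : 1 ≤ ℓ) : ∀ n, Vst ℓ n = HVst ℓ n := by
  intro n
  induction n with
  | zero => rw [Vst_zero, HVst_zero]
  | succ k ih => rw [Vst_succ _ _ hl, HVst_succ _ _ hl, ih]; ring

lemma Vst_rec (ℓ n : ℕ) (hl : 1 ≤ ℓ) : Vst ℓ (n + 1) = 3 * Vst ℓ n + Est ℓ n := by
  rw [Vst_succ _ _ hl, ← VHV_eq _ hl]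
  ring

lemma Vst_small (ℓ : ℕ) (hl : 1 ≤ ℓ) : ∀ m, m ≤ ℓ + 1 → Vst ℓ m = 0 := by
  intro m
  induction m with
  | zero => intro _; exact Vst_zero ℓ
  | succ k ih =>
    intro hk
    rw [Vst_rec _ _ hl, ih (by omega)]
    rcases Nat.lt_or_ge k ℓ with h | h
    · rw [Est_small _ _ h]
    · have : k = ℓ := by omega
      subst this
      have h0 := Est_closed k hl 0
      rw [Nat.zero_add] at h0
      rw [h0, Hst_zero]

lemma Vst_closed (ℓ : ℕ) (hl : 1 ≤ ℓ) :
    ∀ j, ((Vst ℓ (ℓ + 1 + j) : ℕ) : ℚ) = (1 + (2 * (j : ℚ) - 1) * 3 ^ j) / 4 := by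
  intro j
  induction j with
  | zero =>
    rw [Nat.add_zero, Vst_small ℓ hl (ℓ + 1) le_rfl]
    norm_num
  | succ j ih =>
    have h1 : Vst ℓ (ℓ + 1 + (j + 1)) = 3 * Vst ℓ (ℓ + 1 + j) + Hst (j + 1) := by
      rw [show ℓ + 1 + (j + 1) = (ℓ + 1 + j) + 1 by omega, Vst_rec _ _ hl]
      congr 1
      rw [show ℓ + 1 + j = (j + 1) + ℓ by omega, Est_closed ℓ hl (j + 1)]
    have h2 : ((2 * Hst (j + 1) + 1 : ℕ) : ℚ) = (3 : ℚ) ^ (j + 1) := by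
      exact_mod_cast congrArg (fun x : ℕ => (x : ℚ)) (Hst_closed (j + 1))
    have h3 : ((Hst (j + 1) : ℕ) : ℚ) = ((3 : ℚ) ^ (j + 1) - 1) / 2 := by
      push_cast at h2
      linarith
    rw [h1]
    push_cast
    rw [ih, h3]
    push_cast
    ring

end FlatAux
/-- For `ℓ ≥ 1` and `n ≥ ℓ + 2`, the total number of `ℓ`-valleys over all
flattened Catalan words of length `n` equals
`(1 + (2n - 2ℓ - 5)·3^(n - ℓ - 2))/4`. -/
theorem flatCat_total_lValleys (ℓ n : ℕ) (hℓ : 1 ≤ ℓ) (hn : ℓ + 2 ≤ n) :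
    ((∑ᶠ w ∈ FlatCat n, lValleyCount n w ℓ : ℕ) : ℚ) =
      (1 + (2 * (n : ℚ) - 2 * (ℓ : ℚ) - 5) * 3 ^ (n - ℓ - 2)) / 4 := by
  obtain ⟨j, rfl⟩ : ∃ j, n = ℓ + 2 + j := ⟨n - ℓ - 2, by omega⟩
  have hfin := flatcat_finite (ℓ + 2 + j)
  have hsum : (∑ᶠ w ∈ FlatCat (ℓ + 2 + j), lValleyCount (ℓ + 2 + j) w ℓ) =
      Vst ℓ (ℓ + 1 + j) := by
    rw [← Set.Finite.coe_toFinset hfin, finsum_mem_coe_finset]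
    unfold Vst
    rw [show ℓ + 1 + j + 1 = ℓ + 2 + j by omega]
    rfl
  rw [hsum, Vst_closed ℓ hℓ j]
  rw [show ℓ + 2 + j - ℓ - 2 = j by omega]
  push_cast
  ring
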